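/- Let X1,...,Xn be i.i.d. uniform random points in [0,1]^d and let K_{n,d}^{(r)} denote the number of points that dominate exactly r others. Then for n ≥ r+1, E K_{n,d}^{(r)} = n·C(n−1, r) ∫_0^1 x^r (1−x)^{n−1−r} (−log x)^{d−1}/(d−1)! dx. -/

import Mathlib

open MeasureTheory ProbabilityTheory Filter Real Finset
open scoped ENNReal

/-- Uniform distribution on the unit cube `[0,1]^d`. -/
noncomputable def cube (d : ℕ) : Measure (Fin d → ℝ) :=
  Measure.pi fun _ => volume.restrict (Set.Icc 0 1)

/-- Joint law of `n` i.i.d. points uniform in `[0,1]^d`. -/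
noncomputable def sample (n d : ℕ) : Measure (Fin n → Fin d → ℝ) :=
  Measure.pi fun _ => cube d

/-- `x` dominates `y` coordinatewise. -/
def dominates {d : ℕ} (x y : Fin d → ℝ) : Prop := ∀ k, y k ≤ x k

open scoped Classical in
/-- Number of points `X_i` dominates among the others. -/
noncomputable def domCount (n d : ℕ) (ω : Fin n → Fin d → ℝ) (i : Fin n) : ℕ :=
  (Finset.univ.filter fun j => j ≠ i ∧ dominates (ω i) (ω j)).card

open scoped Classical in
/-- Number of non-Pareto points (points dominating at least one other point). -/
noncomputable def nonParetoCount (n d : ℕ) (ω : Fin n → Fin d → ℝ) : ℕ :=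
  (Finset.univ.filter fun i => 1 ≤ domCount n d ω i).card

open scoped Classical in
/-- Number of points dominating exactly `r` other points. -/
noncomputable def layerCount (r n d : ℕ) (ω : Fin n → Fin d → ℝ) : ℕ :=
  (Finset.univ.filter fun i => domCount n d ω i = r).card

/-!
Counting points with indicators, `E K = ∑ᵢ P(Xᵢ dominates exactly r others)`. Conditionally on
`Xᵢ = x`, the other `n - 1` points are dominated independently, each with probability `∏ₖ xₖ`, so
this probability is `∫ B(∏ₖ xₖ) dx` with `B` the Bernstein polynomial `C(n-1,r) X^r (1-X)^(n-1-r)`.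
It remains to integrate a polynomial of `∏ₖ xₖ` against the law of this product, whose density is
`(-log x)^(d-1)/(d-1)!`; by linearity it suffices to compare moments, and both sides of
`∫ (∏ₖ xₖ)^s dx = ∫₀¹ x^s (-log x)^(d-1)/(d-1)! dx` equal `(s+1)^(-d)`, the right one by the
substitution `x = exp (-t)` and Euler's Gamma integral.
-/

theorem image_exp_neg_Ioi_zero : (fun t : ℝ => exp (-t)) '' Set.Ioi 0 = Set.Ioo 0 1 := by
  ext y
  constructor
  · rintro ⟨t, ht, rfl⟩
    exact ⟨exp_pos _, Real.exp_lt_one_iff.2 (neg_lt_zero.2 ht)⟩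
  · rintro ⟨h0, h1⟩
    exact ⟨-log y, neg_pos.2 (log_neg h0 h1), by simp [exp_log h0]⟩

theorem hasDerivAt_exp_neg (t : ℝ) : HasDerivAt (fun t => exp (-t)) (-exp (-t)) t := by
  simpa using (hasDerivAt_neg t).exp

theorem injective_exp_neg : Function.Injective fun t : ℝ => exp (-t) :=
  fun _ _ h => neg_injective (exp_injective h)

section ExpNegSubstitution

variable {E : Type*} [NormedAddCommGroup E] [NormedSpace ℝ E]

theorem integral_Ioc_zero_one_eq_integral_Ioi_exp_neg (g : ℝ → E) :
    ∫ x in Set.Ioc 0 1, g x = ∫ t in Set.Ioi 0, exp (-t) • g (exp (-t)) := by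
  rw [integral_Ioc_eq_integral_Ioo, ← image_exp_neg_Ioi_zero,
    integral_image_eq_integral_abs_deriv_smul measurableSet_Ioi
      (fun t _ => (hasDerivAt_exp_neg t).hasDerivWithinAt) injective_exp_neg.injOn]
  simp only [abs_neg, abs_of_pos (exp_pos _)]

theorem integrableOn_Ioc_zero_one_iff_Ioi_exp_neg (g : ℝ → E) :
    IntegrableOn g (Set.Ioc 0 1) ↔
      IntegrableOn (fun t => exp (-t) • g (exp (-t))) (Set.Ioi 0) := by
  rw [integrableOn_Ioc_iff_integrableOn_Ioo, ← image_exp_neg_Ioi_zero,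
    integrableOn_image_iff_integrableOn_abs_deriv_smul measurableSet_Ioi
      (fun t _ => (hasDerivAt_exp_neg t).hasDerivWithinAt) injective_exp_neg.injOn]
  simp only [abs_neg, abs_of_pos (exp_pos _)]

end ExpNegSubstitution

theorem exp_neg_smul_pow_mul_neg_log_pow (s m : ℕ) (t : ℝ) :
    exp (-t) • (exp (-t) ^ s * (-log (exp (-t))) ^ m) = t ^ m * exp (-((s + 1 : ℝ) * t)) := by
  rw [log_exp, neg_neg, smul_eq_mul, ← exp_nat_mul,
    show -((s + 1 : ℝ) * t) = -t + s * -t by ring, exp_add]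
  ring

theorem integrableOn_pow_mul_neg_log_pow (s m : ℕ) :
    IntegrableOn (fun x : ℝ => x ^ s * (-log x) ^ m) (Set.Ioc 0 1) := by
  rw [integrableOn_Ioc_zero_one_iff_Ioi_exp_neg]
  simp_rw [exp_neg_smul_pow_mul_neg_log_pow]
  refine (integrableOn_rpow_mul_exp_neg_mul_rpow (s := m) (p := 1) (b := s + 1)
    (by linarith [m.cast_nonneg (α := ℝ)]) one_pos (by positivity)).congr_fun
      (fun t _ => ?_) measurableSet_Ioi
  simp only [rpow_one, rpow_natCast, neg_mul]

theorem integral_pow_mul_neg_log_pow (s m : ℕ) :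
    ∫ x in Set.Ioc 0 1, x ^ s * (-log x) ^ m = m.factorial / (s + 1 : ℝ) ^ (m + 1) := by
  rw [integral_Ioc_zero_one_eq_integral_Ioi_exp_neg]
  simp_rw [exp_neg_smul_pow_mul_neg_log_pow]
  have h := integral_rpow_mul_exp_neg_mul_Ioi (a := m + 1) (r := s + 1) (by positivity)
    (by positivity)
  rw [add_sub_cancel_right, Gamma_nat_eq_factorial] at h
  simp_rw [rpow_natCast] at h
  rw [h, ← Nat.cast_add_one m, rpow_natCast, one_div, inv_pow]
  field_simp

noncomputable def uniformProductDensity (m : ℕ) (x : ℝ) : ℝ := (-log x) ^ m / m.factorial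

theorem integrableOn_pow_mul_uniformProductDensity (s m : ℕ) :
    IntegrableOn (fun x => x ^ s * uniformProductDensity m x) (Set.Ioc 0 1) := by
  simp only [uniformProductDensity, ← mul_div_assoc]
  exact (integrableOn_pow_mul_neg_log_pow s m).div_const _

theorem integral_pow_mul_uniformProductDensity (s m : ℕ) :
    ∫ x in Set.Ioc 0 1, x ^ s * uniformProductDensity m x = ((s + 1 : ℝ) ^ (m + 1))⁻¹ := by
  simp only [uniformProductDensity, ← mul_div_assoc]
  rw [integral_div, integral_pow_mul_neg_log_pow]
  field_simp

instance (d : ℕ) : IsProbabilityMeasure (cube d) := by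
  have : IsProbabilityMeasure (volume.restrict (Set.Icc (0 : ℝ) 1)) :=
    ⟨by simp [Real.volume_Icc]⟩
  unfold cube
  infer_instance

instance (n d : ℕ) : IsProbabilityMeasure (sample n d) := by
  unfold sample
  infer_instance

theorem cube_eq_restrict (d : ℕ) :
    cube d = volume.restrict (Set.univ.pi fun _ : Fin d => Set.Icc (0 : ℝ) 1) := by
  refine Measure.pi_eq fun s hs => ?_
  rw [Measure.restrict_apply (MeasurableSet.univ_pi hs), ← Set.pi_inter_distrib, volume_pi,
    Measure.pi_pi]
  exact Finset.prod_congr rfl fun k _ => (Measure.restrict_apply (hs k)).symm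

theorem ae_cube_mem_Icc (d : ℕ) : ∀ᵐ x ∂cube d, ∀ k, x k ∈ Set.Icc (0 : ℝ) 1 := by
  rw [cube_eq_restrict]
  filter_upwards [ae_restrict_mem (MeasurableSet.univ_pi fun _ => measurableSet_Icc)]
    with x hx k using hx k (Set.mem_univ k)

theorem Continuous.integrable_cube {d : ℕ} {f : (Fin d → ℝ) → ℝ} (hf : Continuous f) :
    Integrable f (cube d) := by
  rw [cube_eq_restrict]
  exact hf.continuousOn.integrableOn_compact (isCompact_univ_pi fun _ => isCompact_Icc)

theorem cube_real_setOf_dominates {d : ℕ} {x : Fin d → ℝ} (hx : ∀ k, x k ∈ Set.Icc (0 : ℝ) 1) :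
    (cube d).real {y | dominates x y} = ∏ k, x k := by
  change (cube d).real (Set.Iic x) = _
  rw [← Set.pi_univ_Iic, measureReal_def, cube, Measure.pi_pi, ENNReal.toReal_prod]
  refine Finset.prod_congr rfl fun k _ => ?_
  rw [← measureReal_def, measureReal_restrict_apply measurableSet_Iic, Set.inter_comm,
    ← Set.Ici_inter_Iic, Set.inter_assoc, Set.Iic_inter_Iic, min_eq_right (hx k).2,
    Set.Ici_inter_Iic, Real.volume_real_Icc_of_le (hx k).1, sub_zero]

theorem integral_cube_prod_pow (d s : ℕ) :
    ∫ x, (∏ k, x k) ^ s ∂cube d = ((s + 1 : ℝ) ^ d)⁻¹ := by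
  simp_rw [← Finset.prod_pow]
  refine (integral_fintype_prod_eq_pow (fun y : ℝ => y ^ s)).trans ?_
  rw [Fintype.card_fin, integral_Icc_eq_integral_Ioc,
    ← intervalIntegral.integral_of_le zero_le_one, integral_pow]
  norm_num

theorem integral_cube_eval_prod (p : Polynomial ℝ) (m : ℕ) :
    ∫ x, p.eval (∏ k, x k) ∂cube (m + 1) =
      ∫ x in Set.Ioc 0 1, p.eval x * uniformProductDensity m x := by
  simp_rw [Polynomial.eval_eq_sum_range, Finset.sum_mul, mul_assoc]
  rw [integral_finsetSum _ fun i _ => Continuous.integrable_cube (by fun_prop),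
    integral_finsetSum _ fun i _ => (integrableOn_pow_mul_uniformProductDensity i m).const_mul _]
  refine Finset.sum_congr rfl fun i _ => ?_
  rw [integral_const_mul, integral_const_mul, integral_cube_prod_pow,
    integral_pow_mul_uniformProductDensity]

theorem bernsteinPolynomial.eval_eq {R : Type*} [CommRing R] (n ν : ℕ) (x : R) :
    (bernsteinPolynomial R n ν).eval x = n.choose ν * x ^ ν * (1 - x) ^ (n - ν) := by
  simp [bernsteinPolynomial]

theorem measureReal_pi_card_filter_mem {ι α : Type*} [Fintype ι] [MeasurableSpace α]
    (μ : Measure α) [IsProbabilityMeasure μ] {D : Set α} (hD : MeasurableSet D)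
    [DecidablePred (· ∈ D)] (r : ℕ) :
    (Measure.pi fun _ : ι => μ).real {η | (univ.filter fun j => η j ∈ D).card = r} =
      (bernsteinPolynomial ℝ (Fintype.card ι) r).eval (μ.real D) := by
  classical
  set hits : (ι → α) → Finset ι := fun η => univ.filter fun j => η j ∈ D
  have hfiber (S : Finset ι) :
      hits ⁻¹' {S} = Set.univ.pi fun j => if j ∈ S then D else Dᶜ := by
    ext η
    simp only [Set.mem_preimage, Set.mem_singleton_iff, Finset.ext_iff, Set.mem_univ_pi, hits,
      Finset.mem_filter, Finset.mem_univ, true_and]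
    refine forall_congr' fun j => ?_
    split_ifs with hj <;> simp [hj]
  have hmeas (S : Finset ι) : MeasurableSet (hits ⁻¹' {S}) := by
    rw [hfiber]
    exact MeasurableSet.univ_pi fun j => by split_ifs; exacts [hD, hD.compl]
  have hprob (S : Finset ι) : (Measure.pi fun _ => μ).real (hits ⁻¹' {S}) =
      μ.real D ^ S.card * (1 - μ.real D) ^ (Fintype.card ι - S.card) := by
    rw [hfiber, measureReal_def, Measure.pi_pi, ENNReal.toReal_prod]
    simp only [apply_ite, ← measureReal_def, probReal_compl_eq_one_sub hD]
    rw [prod_ite, prod_const, prod_const, filter_univ_mem, filter_not, filter_univ_mem,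
      card_univ_sdiff]
  have hunion : {η | (hits η).card = r} = ⋃ S ∈ powersetCard r univ, hits ⁻¹' {S} := by
    ext η
    simp [hits]
  rw [hunion, measureReal_biUnion_finset (fun S _ T _ => Set.pairwiseDisjoint_fiber hits _
    (Set.mem_univ S) (Set.mem_univ T)) fun S _ => hmeas S,
    Finset.sum_congr rfl fun S hS => by rw [hprob, (mem_powersetCard.1 hS).2], sum_const,
    card_powersetCard, card_univ, nsmul_eq_mul]
  rw [bernsteinPolynomial.eval_eq]
  ring

theorem measureReal_prod_eq_integral {α β : Type*} [MeasurableSpace α] [MeasurableSpace β]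
    (μ : Measure α) (ν : Measure β) [IsFiniteMeasure ν] {s : Set (α × β)}
    (hs : MeasurableSet s) : (μ.prod ν).real s = ∫ x, ν.real (Prod.mk x ⁻¹' s) ∂μ := by
  rw [measureReal_def, Measure.prod_apply hs, ← integral_toReal
    (measurable_measure_prodMk_left hs).aemeasurable (ae_of_all _ fun _ => measure_lt_top _ _)]
  rfl

theorem measurableSet_dominates {α : Type*} [MeasurableSpace α] {d : ℕ}
    {f g : α → Fin d → ℝ} (hf : Measurable f) (hg : Measurable g) :
    MeasurableSet {a | dominates (f a) (g a)} := by
  simp only [dominates, Set.ofPred_forall]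
  exact MeasurableSet.iInter fun k => measurableSet_le hg.eval hf.eval

theorem measurable_card_filter {α ι : Type*} [MeasurableSpace α] [Fintype ι]
    {P : ι → α → Prop} [∀ i a, Decidable (P i a)] (hP : ∀ i, MeasurableSet {a | P i a}) :
    Measurable fun a => (univ.filter fun i => P i a).card := by
  simp only [card_filter]
  exact Finset.measurable_sum _ fun i _ => Measurable.ite (hP i) measurable_const measurable_const

open scoped Classical in
theorem measurable_domCount (n d : ℕ) (i : Fin n) : Measurable fun ω => domCount n d ω i := by
  unfold domCount
  exact measurable_card_filter fun j => (MeasurableSet.const (j ≠ i)).inter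
    (measurableSet_dominates (measurable_pi_apply i) (measurable_pi_apply j))

open scoped Classical in
theorem domCount_succ {N d : ℕ} (ω : Fin (N + 1) → Fin d → ℝ) (i : Fin (N + 1)) :
    domCount (N + 1) d ω i =
      (univ.filter fun j : Fin N => dominates (ω i) (ω (i.succAbove j))).card := by
  rw [domCount, eq_comm, ← card_image_of_injective _ (Fin.succAbove_right_injective (p := i))]
  refine congrArg card (ext fun j => ?_)
  simp only [mem_filter, mem_univ, true_and, mem_image]
  constructor
  · rintro ⟨k, hdom, rfl⟩
    exact ⟨Fin.succAbove_ne i k, hdom⟩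
  · rintro ⟨hne, hdom⟩
    obtain ⟨k, rfl⟩ := Fin.exists_succAbove_eq hne
    exact ⟨k, hdom, rfl⟩

theorem sample_real_domCount_eq (N d r : ℕ) (i : Fin (N + 1)) :
    (sample (N + 1) d).real {ω | domCount (N + 1) d ω i = r} =
      ∫ x, (bernsteinPolynomial ℝ N r).eval (∏ k, x k) ∂cube d := by
  classical
  set S : Set ((Fin d → ℝ) × (Fin N → Fin d → ℝ)) :=
    {q | (univ.filter fun j => dominates q.1 (q.2 j)).card = r}
  have hS : MeasurableSet S := measurable_card_filter
    (fun j => measurableSet_dominates measurable_fst (measurable_snd.eval (a := j)))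
    (measurableSet_singleton r)
  have hpre : {ω | domCount (N + 1) d ω i = r} =
      MeasurableEquiv.piFinSuccAbove (fun _ => Fin d → ℝ) i ⁻¹' S := by
    ext ω
    change domCount _ _ ω i = r ↔ _
    rw [domCount_succ]
    rfl
  rw [hpre, sample, (measurePreserving_piFinSuccAbove (fun _ => cube d) i).measureReal_preimage
    hS.nullMeasurableSet, measureReal_prod_eq_integral _ _ hS]
  refine integral_congr_ae ?_
  filter_upwards [ae_cube_mem_Icc d] with x hx
  rw [← cube_real_setOf_dominates hx]
  have hbinomial := measureReal_pi_card_filter_mem (ι := Fin N) (cube d)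
    (measurableSet_dominates measurable_const measurable_id : MeasurableSet {y | dominates x y}) r
  rwa [Fintype.card_fin] at hbinomial

theorem integral_card_filter {Ω ι : Type*} [MeasurableSpace Ω] [Fintype ι] (μ : Measure Ω)
    [IsFiniteMeasure μ] {P : ι → Ω → Prop} [∀ i ω, Decidable (P i ω)]
    (hP : ∀ i, MeasurableSet {ω | P i ω}) :
    ∫ ω, ((univ.filter fun i => P i ω).card : ℝ) ∂μ = ∑ i, μ.real {ω | P i ω} := by
  have hind (i : ι) (ω : Ω) :
      (if P i ω then (1 : ℝ) else 0) = {ω | P i ω}.indicator 1 ω := by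
    by_cases h : P i ω <;> simp [h]
  simp_rw [card_filter, Nat.cast_sum, Nat.cast_ite, Nat.cast_one, Nat.cast_zero, hind]
  rw [integral_finsetSum _ fun i _ => (integrable_const 1).indicator (hP i)]
  simp_rw [integral_indicator_one (hP _)]

theorem expected_layer_count_general (n d r : ℕ) (hd : 1 ≤ d) :
    (∫ ω, (layerCount r n d ω : ℝ) ∂ sample n d)
      = (n : ℝ) * ((n - 1).choose r) *
        ∫ x in Set.Ioc (0 : ℝ) 1,
          x ^ r * (1 - x) ^ (n - 1 - r) * (-Real.log x) ^ (d - 1) / (d - 1).factorial := by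
  obtain ⟨m, rfl⟩ := Nat.exists_eq_add_of_le' hd
  rcases n with _ | N
  · simp [layerCount]
  have hbernstein (x : ℝ) : (bernsteinPolynomial ℝ N r).eval x * uniformProductDensity m x =
      N.choose r * (x ^ r * (1 - x) ^ (N - r) * (-log x) ^ m / m.factorial) := by
    rw [bernsteinPolynomial.eval_eq, uniformProductDensity]
    ring
  unfold layerCount
  rw [integral_card_filter (P := fun i ω => domCount (N + 1) (m + 1) ω i = r) _
    fun i => measurable_domCount _ _ i (measurableSet_singleton r)]
  simp_rw [sample_real_domCount_eq, integral_cube_eval_prod, hbernstein, integral_const_mul,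
    sum_const, card_univ, Fintype.card_fin, nsmul_eq_mul, Nat.add_sub_cancel]
  ring

theorem expected_layer_count (n d r : ℕ) (hn : r + 1 ≤ n) (hd : 1 ≤ d) :
    (∫ ω, (layerCount r n d ω : ℝ) ∂ sample n d)
      = (n : ℝ) * ((n - 1).choose r) *
        ∫ x in Set.Ioc (0 : ℝ) 1,
          x ^ r * (1 - x) ^ (n - 1 - r) * (-Real.log x) ^ (d - 1) / (d - 1).factorial :=
  expected_layer_count_general n d r hd
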